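/- arXiv:2401.04056 — 2 statements merged into one kernel-verified Lean document; each statement's English description precedes it below -/
import Mathlib

section
/- In a two-player zero-sum game, if both players use no-regret algorithms with regrets Reg_p(T) and Reg_q(T), then the pair of average strategies (p̄, q̄) is a ((Reg_p(T)+Reg_q(T))/T)-approximate Nash equilibrium. -/
/-- In a two-player zero-sum game, if both players use no-regret algorithms with
regrets `Regp` and `Regq`, then the pair of average strategies is a
`(Regp + Regq)/T`-approximate Nash equilibrium. -/
theorem no_regret_vs_no_regret_approx_nash (n m : ℕ) (M : Fin n → Fin m → ℝ)
    (T : ℕ) (hT : 0 < T)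
    (p : ℕ → Fin n → ℝ) (hp : ∀ t, p t ∈ stdSimplex ℝ (Fin n))
    (q : ℕ → Fin m → ℝ) (hq : ∀ t, q t ∈ stdSimplex ℝ (Fin m))
    (Regp Regq : ℝ)
    (hregp : ∀ pstar ∈ stdSimplex ℝ (Fin n),
      (∑ t ∈ Finset.range T, -(∑ i, ∑ j, p t i * M i j * q t j)) -
      (∑ t ∈ Finset.range T, -(∑ i, ∑ j, pstar i * M i j * q t j)) ≤ Regp)
    (hregq : ∀ qstar ∈ stdSimplex ℝ (Fin m),
      (∑ t ∈ Finset.range T, ∑ i, ∑ j, p t i * M i j * q t j) -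
      (∑ t ∈ Finset.range T, ∑ i, ∑ j, p t i * M i j * qstar j) ≤ Regq) :
    ∀ p' ∈ stdSimplex ℝ (Fin n), ∀ q' ∈ stdSimplex ℝ (Fin m),
      (∑ i, ∑ j, p' i * M i j * ((∑ t ∈ Finset.range T, q t j) / T)) -
      (∑ i, ∑ j, ((∑ t ∈ Finset.range T, p t i) / T) * M i j * q' j) ≤
        (Regp + Regq) / T := by
  intro p' hp' q' hq'
  have hT' : (0:ℝ) < T := by exact_mod_cast hT
  have h1 := hregp p' hp'
  have h2 := hregq q' hq'
  have hA : (∑ i, ∑ j, p' i * M i j * ((∑ t ∈ Finset.range T, q t j) / T))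
      = (∑ t ∈ Finset.range T, ∑ i, ∑ j, p' i * M i j * q t j) / T := by
    simp only [Finset.sum_div, Finset.mul_sum, ← mul_div_assoc]
    exact (Finset.sum_congr rfl fun i _ => Finset.sum_comm).trans Finset.sum_comm
  have hB : (∑ i, ∑ j, ((∑ t ∈ Finset.range T, p t i) / T) * M i j * q' j)
      = (∑ t ∈ Finset.range T, ∑ i, ∑ j, p t i * M i j * q' j) / T := by
    simp only [Finset.sum_div, Finset.sum_mul, div_mul_eq_mul_div]
    exact (Finset.sum_congr rfl fun i _ => Finset.sum_comm).trans Finset.sum_comm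
  rw [hA, hB, div_sub_div_same, div_le_div_iff_of_pos_right hT'] at *
  simp only [Finset.sum_neg_distrib] at h1
  linarith
end

section
/- Under the gap condition, for any mixed strategy q with q(Π*) denoting its total mass on Π*, any policy π* ∈ Π* and any π' ∉ Π*, the expected losses ℓ(π) = Σ_{π''} q(π'')·(-P(π, π'')) satisfy ℓ(π') ≥ ℓ(π*) + q(Π*)·Δ/2. -/
/-- Under the gap condition, for any distribution `q`, any optimal policy `π*` and
any suboptimal policy `π'`, the expected loss of `π'` exceeds that of `π*` by at
least `q(Π*)·Δ/2`. -/
theorem gap_condition_loss_separation {I : Type*} [Fintype I]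
    (Pstar : Finset I) (hne : Pstar.Nonempty) (Δ : ℝ) (hΔ : 0 < Δ)
    (P : I → I → ℝ) (hanti : ∀ a b, P a b = - P b a)
    (h1 : ∀ a ∈ Pstar, ∀ b ∉ Pstar, Δ ≤ P a b)
    (h2 : ∀ a ∈ Pstar, ∀ b ∈ Pstar, -(Δ/2) ≤ P a b ∧ P a b ≤ Δ/2)
    (h3 : ∀ a ∉ Pstar, ∀ b ∉ Pstar, -Δ ≤ P a b ∧ P a b ≤ Δ)
    (q : I → ℝ) (hq0 : ∀ a, 0 ≤ q a) (hq1 : ∑ a, q a = 1)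
    (πs : I) (hπs : πs ∈ Pstar) (πb : I) (hπb : πb ∉ Pstar) :
    (∑ a, q a * (- P πs a)) + (∑ a ∈ Pstar, q a) * (Δ / 2) ≤
      ∑ a, q a * (- P πb a) := by
  classical
  have key : ∀ a, (if a ∈ Pstar then q a * (Δ / 2) else 0) ≤
      q a * (P πs a - P πb a) := by
    intro a
    by_cases ha : a ∈ Pstar
    · rw [if_pos ha]
      have h1' : P πb a ≤ -Δ := by
        have := h1 a ha πb hπb
        rw [hanti πb a]; linarith
      have h2' : -(Δ/2) ≤ P πs a := (h2 πs hπs a ha).1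
      have : Δ / 2 ≤ P πs a - P πb a := by linarith
      exact mul_le_mul_of_nonneg_left this (hq0 a)
    · rw [if_neg ha]
      have h1' : Δ ≤ P πs a := h1 πs hπs a ha
      have h3' : P πb a ≤ Δ := (h3 πb hπb a ha).2
      have : (0:ℝ) ≤ P πs a - P πb a := by linarith
      exact mul_nonneg (hq0 a) this
  have hsum : ∑ a, (if a ∈ Pstar then q a * (Δ / 2) else 0) ≤
      ∑ a, q a * (P πs a - P πb a) :=
    Finset.sum_le_sum fun a _ => key a
  rw [Finset.sum_ite_mem, Finset.univ_inter, ← Finset.sum_mul] at hsum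
  have expand : ∑ a, q a * (P πs a - P πb a) =
      (∑ a, q a * (- P πb a)) - (∑ a, q a * (- P πs a)) := by
    rw [← Finset.sum_sub_distrib]
    congr 1; ext a; ring
  linarith [hsum, expand ▸ hsum]
end
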